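/- arXiv:1912.02563 — 2 statements merged into one kernel-verified Lean document; each statement's English description precedes it below -/
import Mathlib

section
/- Let (X, d, x₀) be a pointed extended pseudometric space and p ∈ [1, ∞]. The following are equivalent: (1) there exists a p-subadditive extended pseudometric ρ on D(X, x₀) with i*ρ = d; (2) d satisfies the p-strengthened triangle inequality d(x, y) ≤ ‖(d(x, x₀), d(x₀, y))‖_p for all x, y ∈ X; (3) i*W_p[d, x₀] = d. -/
open scoped ENNReal BigOperators
noncomputable section

/-- An extended pseudometric. -/
structure IsEPMetric {X : Type*} (d : X → X → ℝ≥0∞) : Prop where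
  refl : ∀ x, d x x = 0
  symm : ∀ x y, d x y = d y x
  triangle : ∀ x y z, d x z ≤ d x y + d y z

/-- The ℓ^p norm of a finite tuple of extended nonnegative reals. -/
def lpNorm (p : ℝ≥0∞) {n : ℕ} (v : Fin n → ℝ≥0∞) : ℝ≥0∞ :=
  if p = ∞ then ⨆ i, v i else (∑ i, v i ^ p.toReal) ^ (1 / p.toReal)

variable {X : Type*}

/-- The congruence on the free commutative monoid (multisets) identifying
formal sums that differ by copies of the basepoint. -/
def diagCon (x₀ : X) : AddCon (Multiset X) where
  r s t := ∃ a b : ℕ, s + Multiset.replicate a x₀ = t + Multiset.replicate b x₀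
  iseqv := by
    constructor
    · exact fun s => ⟨0, 0, rfl⟩
    · rintro s t ⟨a, b, h⟩; exact ⟨b, a, h.symm⟩
    · rintro s t u ⟨a, b, h₁⟩ ⟨a', b', h₂⟩
      refine ⟨a + a', b' + b, ?_⟩
      have h3 : s + Multiset.replicate a x₀ + Multiset.replicate a' x₀
          = u + Multiset.replicate b' x₀ + Multiset.replicate b x₀ := by
        rw [h₁, add_right_comm, h₂, add_right_comm]
      simpa [Multiset.replicate_add, add_assoc] using h3
  add' := by
    rintro s t s' t' ⟨a, b, h₁⟩ ⟨a', b', h₂⟩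
    refine ⟨a + a', b + b', ?_⟩
    have h3 : (s + Multiset.replicate a x₀) + (s' + Multiset.replicate a' x₀)
        = (t + Multiset.replicate b x₀) + (t' + Multiset.replicate b' x₀) := by rw [h₁, h₂]
    calc s + s' + Multiset.replicate (a + a') x₀
        = (s + Multiset.replicate a x₀) + (s' + Multiset.replicate a' x₀) := by
          rw [Multiset.replicate_add]; exact add_add_add_comm s s' _ _
      _ = (t + Multiset.replicate b x₀) + (t' + Multiset.replicate b' x₀) := h3
      _ = t + t' + Multiset.replicate (b + b') x₀ := by
          rw [Multiset.replicate_add]; exact (add_add_add_comm t t' _ _).symm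

/-- The monoid of persistence diagrams on a pointed set. -/
abbrev Diagram (X : Type*) (x₀ : X) := (diagCon x₀).Quotient

/-- The canonical map `X → D(X,x₀)`. -/
def diagι (x₀ : X) (x : X) : Diagram X x₀ := (diagCon x₀).mk' {x}

/-- Pad a tuple to length `r` with copies of the basepoint. -/
def padTo (x₀ : X) {n : ℕ} (x : Fin n → X) (r : ℕ) : Fin r → X :=
  fun k => if h : (k : ℕ) < n then x ⟨k, h⟩ else x₀

/-- The minimal ℓ^p matching cost between two tuples of equal length. -/
def matchCost (d : X → X → ℝ≥0∞) (p : ℝ≥0∞) {r : ℕ} (x y : Fin r → X) : ℝ≥0∞ :=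
  ⨅ σ : Equiv.Perm (Fin r), lpNorm p (fun k => d (x k) (y (σ k)))

/-- A tuple enumerating a multiset. -/
def mFun (s : Multiset X) : Fin s.toList.length → X := fun k => s.toList.get k

/-- The p-Wasserstein cost between two multisets, padding both to the combined length. -/
def WpM (d : X → X → ℝ≥0∞) (x₀ : X) (p : ℝ≥0∞) (s t : Multiset X) : ℝ≥0∞ :=
  matchCost d p (padTo x₀ (mFun s) (Multiset.card s + Multiset.card t))
                (padTo x₀ (mFun t) (Multiset.card s + Multiset.card t))

/-- The p-Wasserstein distance on the monoid of persistence diagrams. -/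
def Wp (d : X → X → ℝ≥0∞) (x₀ : X) (p : ℝ≥0∞) (α β : Diagram X x₀) : ℝ≥0∞ :=
  ⨅ (s : Multiset X) (t : Multiset X) (_ : (diagCon x₀).mk' s = α)
    (_ : (diagCon x₀).mk' t = β), WpM d x₀ p s t

/-- The Lipschitz norm of a map between extended pseudometric spaces. -/
def eLipNorm {Y : Type*} (d : X → X → ℝ≥0∞) (ρ : Y → Y → ℝ≥0∞) (f : X → Y) : ℝ≥0∞ :=
  sInf {C : ℝ≥0∞ | ∀ x y, ρ (f x) (f y) ≤ C * d x y}

/-!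
A matching between two diagrams is a pair of tuples `u v : Fin n → X` representing them; padding
with pairs `(x₀, x₀)` is free, so `W_p` is the infimum of the costs `‖(d (u k) (v k))ₖ‖_p` over
all matchings (`Wp_eq_iInf_pairingCost`). Gluing two matchings along their common middle diagram
gives the triangle inequality, and concatenating matchings gives p-subadditivity.

For `ι x` and `ι y` a matching either pairs `x` with `y` somewhere, or sends `x` and `y` to the
basepoint in two different slots, which costs at least `‖(d(x, x₀), d(x₀, y))‖_p`. Hence the
p-strengthened triangle inequality is exactly what makes `W_p (ι x) (ι y) = d x y`; conversely,
since `ι x₀ = 0`, subadditivity of any `ρ` with `i*ρ = d` applied to `ι x + ι x₀` and `ι x₀ + ι y`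
forces that inequality.
-/

section lpNorm

variable {p : ℝ≥0∞}

theorem lpNorm_top_pair (a b : ℝ≥0∞) : lpNorm ∞ ![a, b] = a ⊔ b := by
  rw [lpNorm, if_pos rfl]
  exact le_antisymm (iSup_le fun i => by fin_cases i <;> simp)
    (sup_le (le_iSup ![a, b] 0) (le_iSup ![a, b] 1))

theorem lpNorm_pair_of_ne_top (hpt : p ≠ ∞) (a b : ℝ≥0∞) :
    lpNorm p ![a, b] = (a ^ p.toReal + b ^ p.toReal) ^ (1 / p.toReal) := by
  rw [lpNorm, if_neg hpt, Fin.sum_univ_two, Matrix.cons_val_zero, Matrix.cons_val_one,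
    Matrix.cons_val_zero]

theorem lpNorm_comp_equiv {m n : ℕ} (e : Fin m ≃ Fin n) (v : Fin n → ℝ≥0∞) :
    lpNorm p (v ∘ e) = lpNorm p v := by
  unfold lpNorm
  split_ifs
  · exact e.surjective.iSup_comp v
  · rw [← e.sum_comp fun i => v i ^ p.toReal]
    rfl

theorem lpNorm_mono {n : ℕ} {v w : Fin n → ℝ≥0∞} (h : v ≤ w) : lpNorm p v ≤ lpNorm p w := by
  unfold lpNorm
  split_ifs
  · exact iSup_mono h
  · gcongr with i
    exact h i

theorem le_lpNorm (hp : p ≠ 0) {n : ℕ} (v : Fin n → ℝ≥0∞) (i : Fin n) : v i ≤ lpNorm p v := by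
  unfold lpNorm
  split_ifs with hpt
  · exact le_iSup v i
  · calc v i = (v i ^ p.toReal) ^ (1 / p.toReal) := by
          rw [← ENNReal.rpow_mul, mul_one_div_cancel (ENNReal.toReal_pos hp hpt).ne',
            ENNReal.rpow_one]
      _ ≤ _ := by
          gcongr
          exact Finset.single_le_sum (f := fun j => v j ^ p.toReal) (fun j _ => zero_le)
            (Finset.mem_univ i)

theorem lpNorm_pair_le {n : ℕ} (v : Fin n → ℝ≥0∞) {i j : Fin n} (hij : i ≠ j) :
    lpNorm p ![v i, v j] ≤ lpNorm p v := by
  by_cases hpt : p = ∞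
  · subst hpt
    rw [lpNorm_top_pair, lpNorm, if_pos rfl]
    exact sup_le (le_iSup v i) (le_iSup v j)
  · rw [lpNorm_pair_of_ne_top hpt, lpNorm, if_neg hpt,
      ← Finset.sum_pair (f := fun k => v k ^ p.toReal) hij]
    gcongr
    exact Finset.subset_univ _

theorem lpNorm_add_le (hp : 1 ≤ p) {n : ℕ} (v w : Fin n → ℝ≥0∞) :
    lpNorm p (v + w) ≤ lpNorm p v + lpNorm p w := by
  unfold lpNorm
  split_ifs with hpt
  · exact iSup_le fun i => add_le_add (le_iSup v i) (le_iSup w i)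
  · exact ENNReal.Lp_add_le _ _ _ (ENNReal.toReal_mono hpt hp)

theorem lpNorm_pair_le_add (hp : 1 ≤ p) (a b : ℝ≥0∞) : lpNorm p ![a, b] ≤ a + b := by
  by_cases hpt : p = ∞
  · subst hpt
    rw [lpNorm_top_pair]
    exact sup_le le_self_add le_add_self
  · rw [lpNorm_pair_of_ne_top hpt]
    exact ENNReal.rpow_add_rpow_le_add a b (ENNReal.toReal_mono hpt hp)

theorem lpNorm_append (hp : p ≠ 0) {m n : ℕ} (v : Fin m → ℝ≥0∞) (w : Fin n → ℝ≥0∞) :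
    lpNorm p (Fin.append v w) = lpNorm p ![lpNorm p v, lpNorm p w] := by
  by_cases hpt : p = ∞
  · subst hpt
    rw [lpNorm_top_pair]
    simp only [lpNorm, if_pos]
    rw [← finSumFinEquiv.surjective.iSup_comp, iSup_sum]
    simp
  · have hp' := ENNReal.toReal_pos hp hpt
    rw [lpNorm_pair_of_ne_top hpt]
    simp only [lpNorm, if_neg hpt, ← ENNReal.rpow_mul,
      one_div_mul_cancel hp'.ne', ENNReal.rpow_one, Fin.sum_univ_add, Fin.append_left,
      Fin.append_right]

theorem lpNorm_zero (hp : p ≠ 0) (n : ℕ) : lpNorm p (0 : Fin n → ℝ≥0∞) = 0 := by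
  unfold lpNorm
  split_ifs with hpt
  · simp
  · have hp' := ENNReal.toReal_pos hp hpt
    simp [ENNReal.zero_rpow_of_pos hp', hp']

theorem lpNorm_fin_one (hp : p ≠ 0) (v : Fin 1 → ℝ≥0∞) : lpNorm p v = v 0 := by
  unfold lpNorm
  split_ifs with hpt
  · simp
  · have hp' := ENNReal.toReal_pos hp hpt
    simp [← ENNReal.rpow_mul, mul_inv_cancel₀ hp'.ne']

theorem lpNorm_pair_zero (hp : p ≠ 0) (a : ℝ≥0∞) : lpNorm p ![a, 0] = a := by
  by_cases hpt : p = ∞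
  · simp [hpt, lpNorm_top_pair]
  · have hp' := ENNReal.toReal_pos hp hpt
    simp [lpNorm_pair_of_ne_top hpt, ENNReal.zero_rpow_of_pos hp', ← ENNReal.rpow_mul,
      mul_inv_cancel₀ hp'.ne']

end lpNorm

section Diagram

variable {x₀ : X}

theorem exists_equiv_comp_eq_of_map_univ_eq {α β : Type*} [Fintype α] [Fintype β]
    {u : α → X} {v : β → X} (h : Finset.univ.val.map u = Finset.univ.val.map v) :
    ∃ e : α ≃ β, u = v ∘ e := by
  classical
  have hfiber : ∀ c, Fintype.card {a // u a = c} = Fintype.card {b // v b = c} := by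
    intro c
    have := congrArg (Multiset.count c) h
    rw [Multiset.count_map, Multiset.count_map] at this
    simpa [Fintype.card_subtype, Finset.card, Finset.filter_val, eq_comm] using this
  exact ⟨Equiv.ofFiberEquiv fun c => Fintype.equivOfCardEq (hfiber c),
    funext fun a => (Equiv.ofFiberEquiv_map _ a).symm⟩

theorem ofFn_padTo {n : ℕ} (f : Fin n → X) {N : ℕ} (h : n ≤ N) :
    List.ofFn (padTo x₀ f N) = List.ofFn f ++ List.replicate (N - n) x₀ := by
  refine List.ext_getElem (by simp; omega) fun k hk _ => ?_
  simp only [List.getElem_ofFn, padTo]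
  split_ifs with hkn
  · rw [List.getElem_append_left (by simpa using hkn)]
    simp
  · rw [List.getElem_append_right (by simp; omega)]
    simp

theorem ofFn_mFun (s : Multiset X) : List.ofFn (mFun s) = s.toList :=
  List.ofFn_get _

theorem mk'_add_replicate (s : Multiset X) (a : ℕ) :
    (diagCon x₀).mk' (s + Multiset.replicate a x₀) = (diagCon x₀).mk' s :=
  (AddCon.eq _).2 ⟨0, a, by simp⟩

theorem diagι_self : diagι x₀ x₀ = 0 := by
  have := mk'_add_replicate (x₀ := x₀) 0 1
  rwa [zero_add, Multiset.replicate_one, map_zero] at this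

def diagOfFn (x₀ : X) {n : ℕ} (u : Fin n → X) : Diagram X x₀ :=
  (diagCon x₀).mk' (List.ofFn u)

theorem exists_diagOfFn_eq (α : Diagram X x₀) :
    ∃ (n : ℕ) (u : Fin n → X), diagOfFn x₀ u = α := by
  obtain ⟨s, rfl⟩ := AddCon.mk'_surjective α
  exact ⟨_, s.toList.get, by rw [diagOfFn, List.ofFn_get, Multiset.coe_toList]⟩

theorem diagOfFn_comp_equiv {m n : ℕ} (e : Fin m ≃ Fin n) (u : Fin n → X) :
    diagOfFn x₀ (u ∘ e) = diagOfFn x₀ u := by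
  obtain rfl := Fin.equiv_iff_eq.1 ⟨e⟩
  rw [diagOfFn, diagOfFn, Multiset.coe_eq_coe.2 (Equiv.Perm.ofFn_comp_perm e u)]

theorem diagOfFn_append {m n : ℕ} (u : Fin m → X) (v : Fin n → X) :
    diagOfFn x₀ (Fin.append u v) = diagOfFn x₀ u + diagOfFn x₀ v := by
  rw [diagOfFn, List.ofFn_fin_append, ← Multiset.coe_add, map_add]
  rfl

theorem diagOfFn_append_const {m : ℕ} (u : Fin m → X) (n : ℕ) :
    diagOfFn x₀ (Fin.append u fun _ : Fin n => x₀) = diagOfFn x₀ u := by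
  rw [diagOfFn, List.ofFn_fin_append, List.ofFn_const, ← Multiset.coe_add,
    Multiset.coe_replicate, mk'_add_replicate]
  rfl

theorem diagOfFn_padTo_mFun (s : Multiset X) {N : ℕ} (h : Multiset.card s ≤ N) :
    diagOfFn x₀ (padTo x₀ (mFun s) N) = (diagCon x₀).mk' s := by
  rw [diagOfFn, ofFn_padTo _ (by simpa using h), ofFn_mFun, ← Multiset.coe_add,
    Multiset.coe_toList, Multiset.coe_replicate, mk'_add_replicate]

theorem diagOfFn_single (x : X) : diagOfFn x₀ ![x] = diagι x₀ x := rfl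

theorem diagOfFn_pair_basepoint_right (x : X) : diagOfFn x₀ ![x, x₀] = diagι x₀ x := by
  rw [diagOfFn, diagι, ← mk'_add_replicate {x} 1]
  rfl

theorem diagOfFn_pair_basepoint_left (x : X) : diagOfFn x₀ ![x₀, x] = diagι x₀ x := by
  rw [diagOfFn, diagι, ← mk'_add_replicate {x} 1, add_comm]
  rfl

theorem exists_equiv_append_const_of_diagOfFn_eq {m n : ℕ} {u : Fin m → X} {v : Fin n → X}
    (h : diagOfFn x₀ u = diagOfFn x₀ v) : ∃ (a b : ℕ) (e : Fin (m + a) ≃ Fin (n + b)),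
      Fin.append u (fun _ => x₀) = Fin.append v (fun _ => x₀) ∘ e := by
  obtain ⟨a, b, hab⟩ := (AddCon.eq _).1 h
  refine ⟨a, b, exists_equiv_comp_eq_of_map_univ_eq ?_⟩
  rw [Fin.univ_val_map, Fin.univ_val_map, List.ofFn_fin_append, List.ofFn_fin_append, List.ofFn_const, List.ofFn_const,
    ← Multiset.coe_add, ← Multiset.coe_add, Multiset.coe_replicate, Multiset.coe_replicate]
  exact hab

theorem range_append_const_of_diagOfFn_eq_diagι {n : ℕ} {u : Fin n → X} {x : X}
    (h : diagOfFn x₀ u = diagι x₀ x) :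
    Set.range (Fin.append u fun _ : Fin 1 => x₀) = {x, x₀} := by
  obtain ⟨a, b, hab⟩ := (AddCon.eq _).1 h
  ext z
  have := congrArg (fun s => z ∈ s ∨ z = x₀) hab
  rw [← List.mem_ofFn', List.ofFn_fin_append, List.ofFn_const]
  simp [Multiset.mem_replicate] at this ⊢
  tauto

end Diagram

section Matching

variable {d : X → X → ℝ≥0∞} {p : ℝ≥0∞}

def pairingCost (d : X → X → ℝ≥0∞) (p : ℝ≥0∞) {n : ℕ} (u v : Fin n → X) : ℝ≥0∞ :=
  lpNorm p fun k => d (u k) (v k)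

theorem pairingCost_comp_equiv {m n : ℕ} (e : Fin m ≃ Fin n) (u v : Fin n → X) :
    pairingCost d p (u ∘ e) (v ∘ e) = pairingCost d p u v :=
  lpNorm_comp_equiv e fun k => d (u k) (v k)

theorem pairingCost_comm (hsymm : ∀ x y, d x y = d y x) {n : ℕ} (u v : Fin n → X) :
    pairingCost d p v u = pairingCost d p u v := by
  simp only [pairingCost, hsymm (v _)]

theorem pairingCost_self (hrefl : ∀ x, d x x = 0) (hp : p ≠ 0) {n : ℕ} (u : Fin n → X) :
    pairingCost d p u u = 0 := by
  simp only [pairingCost, hrefl]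
  exact lpNorm_zero hp n

theorem pairingCost_triangle (htri : ∀ x y z, d x z ≤ d x y + d y z) (hp : 1 ≤ p) {n : ℕ}
    (u v w : Fin n → X) : pairingCost d p u w ≤ pairingCost d p u v + pairingCost d p v w :=
  (lpNorm_mono fun k => htri _ (v k) _).trans (lpNorm_add_le hp _ _)

theorem pairingCost_append (hp : p ≠ 0) {m n : ℕ} (u v : Fin m → X) (u' v' : Fin n → X) :
    pairingCost d p (Fin.append u u') (Fin.append v v')
      = lpNorm p ![pairingCost d p u v, pairingCost d p u' v'] := by
  rw [pairingCost, pairingCost, pairingCost, ← lpNorm_append hp]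
  congr 1
  funext k
  refine Fin.addCases (fun i => ?_) (fun j => ?_) k <;> simp

theorem pairingCost_append_const {x₀ : X} (h₀ : d x₀ x₀ = 0) (hp : p ≠ 0) {m : ℕ}
    (u v : Fin m → X) (n : ℕ) :
    pairingCost d p (Fin.append u fun _ : Fin n => x₀) (Fin.append v fun _ => x₀)
      = pairingCost d p u v := by
  have hconst : pairingCost d p (fun _ : Fin n => x₀) (fun _ => x₀) = 0 := by
    simp only [pairingCost, h₀]
    exact lpNorm_zero hp n
  rw [pairingCost_append hp, hconst, lpNorm_pair_zero hp]

theorem matchCost_comp_equiv_le {r n : ℕ} (e e' : Fin r ≃ Fin n) (u v : Fin n → X) :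
    matchCost d p (u ∘ e) (v ∘ e') ≤ pairingCost d p u v := by
  refine (iInf_le _ (e.trans e'.symm)).trans_eq ?_
  rw [← pairingCost_comp_equiv e u v]
  simp [pairingCost]

theorem le_pairingCost_of_range_eq (hp : p ≠ 0) {x₀ x y : X}
    (hB : d x y ≤ lpNorm p ![d x x₀, d x₀ y]) {n : ℕ} {u v : Fin n → X}
    (hu : Set.range u = {x, x₀}) (hv : Set.range v = {y, x₀}) :
    d x y ≤ pairingCost d p u v := by
  obtain ⟨i, hi⟩ : x ∈ Set.range u := hu ▸ Set.mem_insert _ _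
  obtain ⟨j, hj⟩ : y ∈ Set.range v := hv ▸ Set.mem_insert _ _
  have hu' : ∀ k, u k = x ∨ u k = x₀ := fun k => hu.subset (Set.mem_range_self k)
  have hv' : ∀ k, v k = y ∨ v k = x₀ := fun k => hv.subset (Set.mem_range_self k)
  by_cases hvi : v i = y
  · simpa [pairingCost, hi, hvi] using le_lpNorm hp (fun k => d (u k) (v k)) i
  by_cases huj : u j = x
  · simpa [pairingCost, hj, huj] using le_lpNorm hp (fun k => d (u k) (v k)) j
  have hij : i ≠ j := fun h => hvi (h ▸ hj)
  calc d x y ≤ lpNorm p ![d x x₀, d x₀ y] := hB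
    _ = lpNorm p ![d (u i) (v i), d (u j) (v j)] := by
        rw [hi, (hv' i).resolve_left hvi, (hu' j).resolve_left huj, hj]
    _ ≤ pairingCost d p u v := lpNorm_pair_le _ hij

end Matching

section Wasserstein

variable {d : X → X → ℝ≥0∞} {x₀ : X} {p : ℝ≥0∞}

theorem Wp_le_pairingCost (h₀ : d x₀ x₀ = 0) (hp : p ≠ 0) {n : ℕ} (u v : Fin n → X) :
    Wp d x₀ p (diagOfFn x₀ u) (diagOfFn x₀ v) ≤ pairingCost d p u v := by
  set s : Multiset X := ↑(List.ofFn u)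
  set t : Multiset X := ↑(List.ofFn v)
  have hcard : Multiset.card s + Multiset.card t = n + n := by simp [s, t]
  have hpad : ∀ w : Fin n → X, ∃ e : Fin (Multiset.card s + Multiset.card t) ≃ Fin (n + n),
      padTo x₀ (mFun (List.ofFn w : Multiset X)) (Multiset.card s + Multiset.card t)
        = Fin.append w (fun _ => x₀) ∘ e := by
    intro w
    refine exists_equiv_comp_eq_of_map_univ_eq ?_
    rw [Fin.univ_val_map, Fin.univ_val_map, ofFn_padTo _ (by simp [hcard]), ofFn_mFun, List.ofFn_fin_append, List.ofFn_const,
      ← Multiset.coe_add, ← Multiset.coe_add, Multiset.coe_toList]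
    simp [hcard]
  -- `WpM` pads both multisets to length `2n`; up to reordering, the padded tuples are `u` and `v`
  -- followed by `n` copies of `x₀`.
  obtain ⟨e, he⟩ := hpad u
  obtain ⟨e', he'⟩ := hpad v
  calc Wp d x₀ p (diagOfFn x₀ u) (diagOfFn x₀ v) ≤ WpM d x₀ p s t :=
        iInf_le_of_le s <| iInf_le_of_le t <| iInf_le_of_le rfl <| iInf_le _ rfl
    _ ≤ pairingCost d p (Fin.append u fun _ => x₀) (Fin.append v fun _ => x₀) := by
        rw [WpM, he, he']
        exact matchCost_comp_equiv_le e e' _ _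
    _ = pairingCost d p u v := pairingCost_append_const h₀ hp u v n

theorem iInf_pairingCost_le_Wp (α β : Diagram X x₀) :
    ⨅ (n : ℕ) (u : Fin n → X) (v : Fin n → X) (_ : diagOfFn x₀ u = α)
      (_ : diagOfFn x₀ v = β), pairingCost d p u v ≤ Wp d x₀ p α β := by
  simp only [Wp, WpM, matchCost, le_iInf_iff]
  rintro s t rfl rfl σ
  refine iInf_le_of_le _ (iInf_le_of_le (padTo x₀ (mFun s) _)
    (iInf_le_of_le (padTo x₀ (mFun t) _ ∘ σ) ?_))
  rw [diagOfFn_comp_equiv, diagOfFn_padTo_mFun _ le_self_add, diagOfFn_padTo_mFun _ le_add_self]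
  exact iInf_le_of_le rfl (iInf_le _ rfl)

theorem Wp_eq_iInf_pairingCost (h₀ : d x₀ x₀ = 0) (hp : p ≠ 0) (α β : Diagram X x₀) :
    Wp d x₀ p α β = ⨅ (n : ℕ) (u : Fin n → X) (v : Fin n → X) (_ : diagOfFn x₀ u = α)
      (_ : diagOfFn x₀ v = β), pairingCost d p u v := by
  refine le_antisymm ?_ (iInf_pairingCost_le_Wp α β)
  simp only [le_iInf_iff]
  rintro n u v rfl rfl
  exact Wp_le_pairingCost h₀ hp u v

theorem exists_pairingCost_lt {α β : Diagram X x₀} {c : ℝ≥0∞} (h : Wp d x₀ p α β < c) :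
    ∃ (n : ℕ) (u v : Fin n → X),
      diagOfFn x₀ u = α ∧ diagOfFn x₀ v = β ∧ pairingCost d p u v < c := by
  simpa only [iInf_lt_iff, exists_prop] using (iInf_pairingCost_le_Wp α β).trans_lt h

theorem Wp_self (hrefl : ∀ x, d x x = 0) (hp : p ≠ 0) (α : Diagram X x₀) :
    Wp d x₀ p α α = 0 := by
  obtain ⟨n, u, rfl⟩ := exists_diagOfFn_eq α
  exact nonpos_iff_eq_zero.1 <|
    (Wp_le_pairingCost (hrefl x₀) hp u u).trans_eq (pairingCost_self hrefl hp u)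

theorem Wp_comm (h₀ : d x₀ x₀ = 0) (hsymm : ∀ x y, d x y = d y x) (hp : p ≠ 0)
    (α β : Diagram X x₀) : Wp d x₀ p α β = Wp d x₀ p β α := by
  suffices h : ∀ α β : Diagram X x₀, Wp d x₀ p β α ≤ Wp d x₀ p α β from
    le_antisymm (h β α) (h α β)
  intro α β
  rw [Wp_eq_iInf_pairingCost h₀ hp α β]
  simp only [le_iInf_iff]
  rintro n u v rfl rfl
  exact (Wp_le_pairingCost h₀ hp v u).trans_eq (pairingCost_comm hsymm u v)

theorem Wp_triangle (hd : IsEPMetric d) (hp : 1 ≤ p) (α β γ : Diagram X x₀) :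
    Wp d x₀ p α γ ≤ Wp d x₀ p α β + Wp d x₀ p β γ := by
  have hp₀ : p ≠ 0 := (zero_lt_one.trans_le hp).ne'
  rw [Wp_eq_iInf_pairingCost (hd.refl x₀) hp₀ α β, Wp_eq_iInf_pairingCost (hd.refl x₀) hp₀ β γ]
  simp only [ENNReal.iInf_add, ENNReal.add_iInf, le_iInf_iff]
  rintro n v' w rfl rfl m u v rfl hv
  obtain ⟨a, b, e, he⟩ := exists_equiv_append_const_of_diagOfFn_eq hv
  calc Wp d x₀ p (diagOfFn x₀ u) (diagOfFn x₀ w)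
      = Wp d x₀ p (diagOfFn x₀ (Fin.append u fun _ : Fin a => x₀))
          (diagOfFn x₀ ((Fin.append w fun _ : Fin b => x₀) ∘ e)) := by
        rw [diagOfFn_comp_equiv, diagOfFn_append_const, diagOfFn_append_const]
    _ ≤ pairingCost d p (Fin.append u fun _ => x₀) ((Fin.append w fun _ => x₀) ∘ e) :=
        Wp_le_pairingCost (hd.refl x₀) hp₀ _ _
    _ ≤ pairingCost d p (Fin.append u fun _ => x₀) (Fin.append v fun _ => x₀)
          + pairingCost d p (Fin.append v fun _ => x₀) ((Fin.append w fun _ => x₀) ∘ e) :=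
        pairingCost_triangle hd.triangle hp _ _ _
    _ = pairingCost d p u v + pairingCost d p v' w := by
        rw [pairingCost_append_const (hd.refl x₀) hp₀, he, pairingCost_comp_equiv,
          pairingCost_append_const (hd.refl x₀) hp₀]

theorem isEPMetric_Wp (hd : IsEPMetric d) (hp : 1 ≤ p) : IsEPMetric (Wp d x₀ p) :=
  have hp₀ : p ≠ 0 := (zero_lt_one.trans_le hp).ne'
  ⟨Wp_self hd.refl hp₀, Wp_comm (hd.refl x₀) hd.symm hp₀, Wp_triangle hd hp⟩

theorem Wp_add_le (h₀ : d x₀ x₀ = 0) (hp : 1 ≤ p) (α α' β β' : Diagram X x₀) :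
    Wp d x₀ p (α + β) (α' + β') ≤ lpNorm p ![Wp d x₀ p α α', Wp d x₀ p β β'] := by
  have hp₀ : p ≠ 0 := (zero_lt_one.trans_le hp).ne'
  refine ENNReal.le_of_forall_pos_le_add fun ε hε hfin => ?_
  set δ : ℝ≥0∞ := ε / 2
  have hδ : δ ≠ 0 := by simpa [δ] using hε.ne'
  have hα : Wp d x₀ p α α' ≠ ∞ := ((le_lpNorm hp₀ _ 0).trans_lt hfin).ne
  have hβ : Wp d x₀ p β β' ≠ ∞ := ((le_lpNorm hp₀ _ 1).trans_lt hfin).ne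
  obtain ⟨m, u, u', rfl, rfl, hu⟩ := exists_pairingCost_lt (ENNReal.lt_add_right hα hδ)
  obtain ⟨n, v, v', rfl, rfl, hv⟩ := exists_pairingCost_lt (ENNReal.lt_add_right hβ hδ)
  calc Wp d x₀ p (diagOfFn x₀ u + diagOfFn x₀ v) (diagOfFn x₀ u' + diagOfFn x₀ v')
      ≤ pairingCost d p (Fin.append u v) (Fin.append u' v') := by
        rw [← diagOfFn_append, ← diagOfFn_append]
        exact Wp_le_pairingCost h₀ hp₀ _ _
    _ = lpNorm p ![pairingCost d p u u', pairingCost d p v v'] := pairingCost_append hp₀ _ _ _ _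
    _ ≤ lpNorm p (![Wp d x₀ p (diagOfFn x₀ u) (diagOfFn x₀ u'),
          Wp d x₀ p (diagOfFn x₀ v) (diagOfFn x₀ v')] + ![δ, δ]) := by
        refine lpNorm_mono fun i => ?_
        fin_cases i
        exacts [hu.le, hv.le]
    _ ≤ _ + lpNorm p ![δ, δ] := lpNorm_add_le hp _ _
    _ ≤ _ + ε := by
        gcongr
        exact (lpNorm_pair_le_add hp _ _).trans_eq (ENNReal.add_halves _)

end Wasserstein

section Pullback

variable {d : X → X → ℝ≥0∞} {x₀ : X} {p : ℝ≥0∞}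

theorem Wp_diagι_le (h₀ : d x₀ x₀ = 0) (hp : p ≠ 0) (x y : X) :
    Wp d x₀ p (diagι x₀ x) (diagι x₀ y) ≤ d x y := by
  rw [← diagOfFn_single, ← diagOfFn_single]
  exact (Wp_le_pairingCost h₀ hp _ _).trans_eq (lpNorm_fin_one hp _)

theorem Wp_diagι_le_lpNorm (h₀ : d x₀ x₀ = 0) (hp : p ≠ 0) (x y : X) :
    Wp d x₀ p (diagι x₀ x) (diagι x₀ y) ≤ lpNorm p ![d x x₀, d x₀ y] := by
  rw [← diagOfFn_pair_basepoint_right x, ← diagOfFn_pair_basepoint_left y]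
  refine (Wp_le_pairingCost h₀ hp _ _).trans_eq ?_
  rw [pairingCost]
  congr 1
  ext k
  fin_cases k <;> rfl

theorem le_Wp_diagι (h₀ : d x₀ x₀ = 0) (hp : p ≠ 0) {x y : X}
    (hB : d x y ≤ lpNorm p ![d x x₀, d x₀ y]) : d x y ≤ Wp d x₀ p (diagι x₀ x) (diagι x₀ y) := by
  rw [Wp_eq_iInf_pairingCost h₀ hp]
  simp only [le_iInf_iff]
  intro n u v hu hv
  -- One extra pair `(x₀, x₀)` makes `x` and `y` occur in the tuples even when they equal `x₀`.
  rw [← pairingCost_append_const h₀ hp u v 1]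
  exact le_pairingCost_of_range_eq hp hB (range_append_const_of_diagOfFn_eq_diagι hu)
    (range_append_const_of_diagOfFn_eq_diagι hv)

end Pullback

/-- TFAE: (1) there is a p-subadditive extended pseudometric on `D(X,x₀)` pulling back
to `d`; (2) `d` satisfies the p-strengthened triangle inequality at `x₀`;
(3) `W_p` pulls back to `d` along the canonical map. -/
theorem pullback_tfae (d : X → X → ℝ≥0∞) (hd : IsEPMetric d) (x₀ : X)
    (p : ℝ≥0∞) (hp : 1 ≤ p) :
    ((∃ ρ : Diagram X x₀ → Diagram X x₀ → ℝ≥0∞, IsEPMetric ρ ∧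
        (∀ a a' b b' : Diagram X x₀, ρ (a + b) (a' + b') ≤ lpNorm p ![ρ a a', ρ b b']) ∧
        ∀ x y : X, ρ (diagι x₀ x) (diagι x₀ y) = d x y)
      ↔ (∀ x y : X, d x y ≤ lpNorm p ![d x x₀, d x₀ y])) ∧
    ((∀ x y : X, d x y ≤ lpNorm p ![d x x₀, d x₀ y])
      ↔ (∀ x y : X, Wp d x₀ p (diagι x₀ x) (diagι x₀ y) = d x y)) := by
  have hp₀ : p ≠ 0 := (zero_lt_one.trans_le hp).ne'
  have h₀ : d x₀ x₀ = 0 := hd.refl x₀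
  have Wp_pullback (hB : ∀ x y : X, d x y ≤ lpNorm p ![d x x₀, d x₀ y]) (x y : X) :
      Wp d x₀ p (diagι x₀ x) (diagι x₀ y) = d x y :=
    le_antisymm (Wp_diagι_le h₀ hp₀ x y) (le_Wp_diagι h₀ hp₀ (hB x y))
  refine ⟨⟨?_, fun hB => ⟨Wp d x₀ p, isEPMetric_Wp hd hp, Wp_add_le h₀ hp, Wp_pullback hB⟩⟩,
    Wp_pullback, fun hW x y => (hW x y).symm.trans_le (Wp_diagι_le_lpNorm h₀ hp₀ x y)⟩
  rintro ⟨ρ, -, hsub, hρ⟩ x y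
  have h := hsub (diagι x₀ x) (diagι x₀ x₀) (diagι x₀ x₀) (diagι x₀ y)
  rwa [hρ, hρ, diagι_self, add_zero, zero_add, hρ] at h

end
end

section
/- Kantorovich-Rubinstein duality for persistence diagrams: let (X, d, x₀) be a pointed metric space and α = a₁+⋯+a_n, β = b₁+⋯+b_m ∈ D(X, x₀). Then W₁[d, x₀](α, β) equals the maximum over all 1-Lipschitz functions h : X → ℝ of Σᵢ h(aᵢ) − Σⱼ h(bⱼ) + (m − n)h(x₀), and this maximum is attained. -/
open scoped ENNReal BigOperators
noncomputable section

variable {X : Type*}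

/-!
A 1-Lipschitz `h` pays at most `d(x, y)` along each edge of a matching of the padded tuples,
and `Σ (h aᵢ - h x₀) - Σ (h bⱼ - h x₀)` ignores copies of `x₀`, so every such `h` gives a lower
bound for `W₁`. For the converse fix an optimal matching `σ₀` of the padded tuples `x, y`.
Optimality says exactly that the reassignment weights `c(σ₀⁻¹ i, j) - c(σ₀⁻¹ i, i)` have no
negative cycle, so shortest simple paths give potentials `p` with
`c(k, σ₀ k) + p(σ₀ k) ≤ c(k, j) + p j` (complementary slackness for the assignment problem).
Then `h z = minⱼ (d(z, yⱼ) + pⱼ)` is 1-Lipschitz, `h (x k) = c(k, σ₀ k) + p(σ₀ k)` and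
`h (y j) ≤ p j`, so `h` recovers the optimal cost.
-/

section PathWeight

variable {ι : Type*} (W : ι → ι → ℝ)

def pathWeight : List ι → ℝ
  | a :: b :: t => W a b + pathWeight (b :: t)
  | _ => 0

@[simp] lemma pathWeight_nil : pathWeight W [] = 0 := rfl

@[simp] lemma pathWeight_singleton (a : ι) : pathWeight W [a] = 0 := rfl

@[simp] lemma pathWeight_cons_cons (a b : ι) (t : List ι) :
    pathWeight W (a :: b :: t) = W a b + pathWeight W (b :: t) := rfl

lemma pathWeight_append_cons : ∀ (s : List ι) (a : ι) (t : List ι),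
    pathWeight W (s ++ a :: t) = pathWeight W (s ++ [a]) + pathWeight W (a :: t)
  | [], _, _ => by simp
  | [_], _, _ => by simp
  | b :: c :: s, a, t => by
    show W b c + pathWeight W (c :: s ++ a :: t)
      = W b c + pathWeight W (c :: s ++ [a]) + pathWeight W (a :: t)
    rw [pathWeight_append_cons (c :: s) a t, add_assoc]

lemma sum_map_eq_pathWeight_of_isChain (f : ι → ι) (c : ι) : ∀ l : List ι,
    (l ++ [c]).IsChain (fun i j => f i = j) →
      (l.map fun i => W i (f i)).sum = pathWeight W (l ++ [c])
  | [], _ => by simp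
  | [a], h => by simp_all
  | a :: b :: t, h => by
    obtain ⟨hab, hchain⟩ := List.isChain_cons_cons.1 h
    show W a (f a) + ((b :: t).map fun i => W i (f i)).sum = W a b + pathWeight W (b :: t ++ [c])
    rw [hab, sum_map_eq_pathWeight_of_isChain f c (b :: t) hchain]

lemma isChain_formPerm_append_head [DecidableEq ι] (a : ι) (t : List ι)
    (hnd : (a :: t).Nodup) :
    (a :: t ++ [a]).IsChain (fun i j => (a :: t).formPerm i = j) := by
  rw [List.isChain_iff_getElem]
  intro k hk
  simp only [List.length_append, List.length_singleton] at hk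
  rw [List.getElem_append_left (by omega)]
  rcases Nat.lt_or_ge (k + 1) (a :: t).length with hlt | hge
  · rw [List.getElem_append_left hlt]
    exact List.formPerm_apply_lt_getElem _ hnd k hlt
  · have hlast : (a :: t)[k]'(by omega) = (a :: t).getLast (List.cons_ne_nil a t) := by
      rw [List.getLast_eq_getElem]; congr 1; omega
    rw [List.getElem_append_right hge, hlast, List.formPerm_apply_getLast]
    simp

lemma pathWeight_cycle_nonneg [Fintype ι] (hdiag : ∀ i, W i i = 0)
    (hcyc : ∀ τ : Equiv.Perm ι, 0 ≤ ∑ i, W i (τ i)) (a : ι) (t : List ι)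
    (hnd : (a :: t).Nodup) : 0 ≤ pathWeight W (a :: t ++ [a]) := by
  classical
  set τ := (a :: t).formPerm
  have hsupp : ∑ i ∈ (a :: t).toFinset, W i (τ i) = ∑ i, W i (τ i) := by
    refine Finset.sum_subset (Finset.subset_univ _) fun i _ hi => ?_
    rw [List.formPerm_apply_of_notMem (by simpa using hi), hdiag]
  rw [← sum_map_eq_pathWeight_of_isChain W τ a _ (isChain_formPerm_append_head a t hnd),
    ← List.sum_toFinset _ hnd, hsupp]
  exact hcyc τ

/-- The potential of `i` is the least weight of a simple path starting at `i`. -/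
theorem exists_potential_of_forall_perm_nonneg [Fintype ι]
    (hdiag : ∀ i, W i i = 0) (hcyc : ∀ τ : Equiv.Perm ι, 0 ≤ ∑ i, W i (τ i)) :
    ∃ q : ι → ℝ, ∀ i j, q i ≤ W i j + q j := by
  have hmin : ∀ i, ∃ t ∈ {t : List ι | (i :: t).Nodup},
      ∀ t' ∈ {t : List ι | (i :: t).Nodup}, pathWeight W (i :: t) ≤ pathWeight W (i :: t') := by
    intro i
    refine Set.exists_min_image _ _ ((List.finite_length_le ι (Fintype.card ι)).subset ?_)
      ⟨[], List.nodup_singleton i⟩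
    exact fun t ht => Nat.le_of_succ_le (List.Nodup.length_le_card ht)
  choose T hTnd hTmin using hmin
  refine ⟨fun i => pathWeight W (i :: T i), fun i j => ?_⟩
  by_cases hi : i ∈ j :: T j
  · obtain ⟨s, u, hsu⟩ := List.append_of_mem hi
    have hnd : (s ++ i :: u).Nodup := hsu ▸ hTnd j
    have hcycle := pathWeight_cycle_nonneg W hdiag hcyc i s
      ((List.nodup_middle.1 hnd).sublist ((List.sublist_append_left s u).cons_cons i))
    have hsplit : W i j + pathWeight W (j :: T j)
        = pathWeight W (i :: s ++ [i]) + pathWeight W (i :: u) := by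
      rw [← pathWeight_cons_cons, hsu, ← List.cons_append, pathWeight_append_cons]
    have hu := hTmin i u (hnd.sublist (List.sublist_append_right s _))
    linarith
  · exact hTmin i (j :: T j) (List.nodup_cons.2 ⟨hi, hTnd j⟩)

end PathWeight

theorem exists_potential_of_optimal_assignment {κ : Type*} [Fintype κ]
    (c : κ → κ → ℝ) (σ₀ : Equiv.Perm κ)
    (hσ₀ : ∀ σ : Equiv.Perm κ, ∑ k, c k (σ₀ k) ≤ ∑ k, c k (σ k)) :
    ∃ p : κ → ℝ, ∀ k j, c k (σ₀ k) + p (σ₀ k) ≤ c k j + p j := by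
  -- `W i j` is the change of cost when the partner `σ₀.symm i` of `i` is rematched to `j`,
  -- so the cycles of `τ` have total weight `cost (σ₀.trans τ) - cost σ₀`.
  set W : κ → κ → ℝ := fun i j => c (σ₀.symm i) j - c (σ₀.symm i) i
  have hcyc : ∀ τ : Equiv.Perm κ, 0 ≤ ∑ i, W i (τ i) := by
    intro τ
    have hreindex : ∑ i, W i (τ i) = ∑ k, c k (τ (σ₀ k)) - ∑ k, c k (σ₀ k) := by
      rw [← Finset.sum_sub_distrib, ← Equiv.sum_comp σ₀]
      simp [W]
    rw [hreindex, sub_nonneg]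
    exact hσ₀ (σ₀.trans τ)
  obtain ⟨p, hp⟩ := exists_potential_of_forall_perm_nonneg W (fun i => sub_self _) hcyc
  refine ⟨p, fun k j => ?_⟩
  have := hp (σ₀ k) j
  simp only [W, Equiv.symm_apply_apply] at this
  linarith

lemma sum_padTo {M : Type*} [AddCommMonoid M] (x₀ : X) (f : X → M) {q r : ℕ} (u : Fin q → X)
    (hqr : q ≤ r) : ∑ k : Fin r, f (padTo x₀ u r k) = ∑ i, f (u i) + (r - q) • f x₀ := by
  obtain ⟨e, rfl⟩ := Nat.exists_eq_add_of_le hqr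
  simp [Fin.sum_univ_add, padTo]

lemma sum_mFun {M : Type*} [AddCommMonoid M] (f : X → M) (s : Multiset X) :
    ∑ i, f (mFun s i) = (s.map f).sum := by
  conv_rhs => rw [← Multiset.coe_toList s]
  rw [Multiset.map_coe, Multiset.sum_coe, ← List.ofFn_getElem_eq_map, List.sum_ofFn]
  rfl

/-- Descends to the morphism `D(X, x₀) → ℝ` induced by `h`. -/
def diagPairing (x₀ : X) (h : X → ℝ) (s : Multiset X) : ℝ :=
  (s.map fun x => h x - h x₀).sum

lemma diagPairing_eq_of_rel (x₀ : X) (h : X → ℝ) {s t : Multiset X} (hst : diagCon x₀ s t) :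
    diagPairing x₀ h s = diagPairing x₀ h t := by
  obtain ⟨a, b, hab⟩ := hst
  simpa [diagPairing] using congrArg (diagPairing x₀ h) hab

lemma sum_map_sub_sum_map_add_eq_diagPairing_sub (x₀ : X) (h : X → ℝ) (s t : Multiset X) :
    (s.map h).sum - (t.map h).sum + ((Multiset.card t : ℝ) - (Multiset.card s : ℝ)) * h x₀
      = diagPairing x₀ h s - diagPairing x₀ h t := by
  simp [diagPairing, Multiset.sum_map_sub]
  ring

lemma diagPairing_sub_eq_sum_padTo (x₀ : X) (h : X → ℝ) (s t : Multiset X) {r : ℕ}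
    (hs : Multiset.card s ≤ r) (ht : Multiset.card t ≤ r) :
    diagPairing x₀ h s - diagPairing x₀ h t
      = ∑ k, h (padTo x₀ (mFun s) r k) - ∑ k, h (padTo x₀ (mFun t) r k) := by
  rw [sum_padTo x₀ h _ (by simpa using hs), sum_padTo x₀ h _ (by simpa using ht), sum_mFun,
    sum_mFun, ← sum_map_sub_sum_map_add_eq_diagPairing_sub]
  simp [Nat.cast_sub hs, Nat.cast_sub ht]
  ring

lemma Wp_mk_le_WpM (d : X → X → ℝ≥0∞) (x₀ : X) (p : ℝ≥0∞) (s t : Multiset X) :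
    Wp d x₀ p ((diagCon x₀).mk' s) ((diagCon x₀).mk' t) ≤ WpM d x₀ p s t :=
  iInf₂_le_of_le s t (iInf_le_of_le rfl (iInf_le _ rfl))

section Metric

variable [PseudoMetricSpace X] {κ : Type*} [Fintype κ]

lemma sum_sub_sum_le_sum_dist {h : X → ℝ} (hh : LipschitzWith 1 h) (x y : κ → X) :
    ∑ k, h (x k) - ∑ k, h (y k) ≤ ∑ k, dist (x k) (y k) := by
  rw [← Finset.sum_sub_distrib]
  gcongr with k
  simpa using (le_abs_self _).trans (hh.dist_le_mul (x k) (y k))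

lemma lipschitzWith_inf'_dist_add [Nonempty κ] (y : κ → X) (p : κ → ℝ) :
    LipschitzWith 1 fun z => Finset.univ.inf' Finset.univ_nonempty fun j => dist z (y j) + p j := by
  refine LipschitzWith.of_le_add fun z w => ?_
  obtain ⟨j, -, hj⟩ := Finset.exists_mem_eq_inf' Finset.univ_nonempty
    fun j => dist w (y j) + p j
  rw [hj]
  calc _ ≤ dist z (y j) + p j := Finset.inf'_le _ (Finset.mem_univ j)
    _ ≤ dist w (y j) + p j + dist z w := by linarith [dist_triangle z w (y j)]

theorem exists_lipschitzWith_sum_dist_le (x y : κ → X) (σ₀ : Equiv.Perm κ)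
    (hσ₀ : ∀ σ : Equiv.Perm κ, ∑ k, dist (x k) (y (σ₀ k)) ≤ ∑ k, dist (x k) (y (σ k))) :
    ∃ h : X → ℝ, LipschitzWith 1 h ∧
      ∑ k, dist (x k) (y (σ₀ k)) ≤ ∑ k, h (x k) - ∑ k, h (y k) := by
  cases isEmpty_or_nonempty κ
  · exact ⟨fun _ => 0, LipschitzWith.const' 0, by simp⟩
  obtain ⟨p, hp⟩ := exists_potential_of_optimal_assignment (fun k j => dist (x k) (y j)) σ₀ hσ₀
  set h : X → ℝ := fun z => Finset.univ.inf' Finset.univ_nonempty fun j => dist z (y j) + p j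
  have hx : ∀ k, h (x k) = dist (x k) (y (σ₀ k)) + p (σ₀ k) := fun k =>
    le_antisymm (Finset.inf'_le _ (Finset.mem_univ _))
      (Finset.le_inf' _ _ fun j _ => hp k j)
  have hy : ∀ j, h (y j) ≤ p j := fun j => by
    simpa using Finset.inf'_le (fun i => dist (y j) (y i) + p i) (Finset.mem_univ j)
  refine ⟨h, lipschitzWith_inf'_dist_add y p, ?_⟩
  calc ∑ k, dist (x k) (y (σ₀ k))
      = ∑ k, h (x k) - ∑ k, p (σ₀ k) := by simp [hx, Finset.sum_add_distrib]
    _ ≤ ∑ k, h (x k) - ∑ k, h (y k) := by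
      rw [Equiv.sum_comp σ₀ p]
      gcongr with j
      exact hy j

lemma matchCost_edist_one {r : ℕ} (x y : Fin r → X) :
    matchCost edist 1 x y
      = ⨅ σ : Equiv.Perm (Fin r), ENNReal.ofReal (∑ k, dist (x k) (y (σ k))) := by
  simp [matchCost, lpNorm, edist_dist, ENNReal.ofReal_sum_of_nonneg]

lemma ofReal_diagPairing_sub_le_WpM (x₀ : X) {h : X → ℝ} (hh : LipschitzWith 1 h)
    (s t : Multiset X) :
    ENNReal.ofReal (diagPairing x₀ h s - diagPairing x₀ h t) ≤ WpM edist x₀ 1 s t := by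
  rw [WpM, matchCost_edist_one, diagPairing_sub_eq_sum_padTo x₀ h s t le_self_add le_add_self]
  refine le_iInf fun σ => ENNReal.ofReal_le_ofReal ?_
  rw [← Equiv.sum_comp σ fun k => h (padTo x₀ (mFun t) _ k)]
  exact sum_sub_sum_le_sum_dist hh _ _

lemma ofReal_diagPairing_sub_le_Wp (x₀ : X) {h : X → ℝ} (hh : LipschitzWith 1 h)
    (s t : Multiset X) :
    ENNReal.ofReal (diagPairing x₀ h s - diagPairing x₀ h t)
      ≤ Wp edist x₀ 1 ((diagCon x₀).mk' s) ((diagCon x₀).mk' t) := by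
  refine le_iInf₂ fun s' t' => le_iInf₂ fun hs ht => ?_
  rw [← diagPairing_eq_of_rel x₀ h ((AddCon.eq _).1 hs),
    ← diagPairing_eq_of_rel x₀ h ((AddCon.eq _).1 ht)]
  exact ofReal_diagPairing_sub_le_WpM x₀ hh s' t'

end Metric

/-- Kantorovich–Rubinstein duality for persistence diagrams on a pointed metric space:
`W₁(α, β)` is the maximum, over 1-Lipschitz `h : X → ℝ`, of
`Σᵢ h(aᵢ) − Σⱼ h(bⱼ) + (m − n)·h(x₀)`, and the maximum is attained. -/
theorem kantorovich_rubinstein_duality {X : Type*} [MetricSpace X] (x₀ : X)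
    (s t : Multiset X) :
    ∃ h : X → ℝ, LipschitzWith 1 h ∧
      ENNReal.ofReal ((s.map h).sum - (t.map h).sum
          + ((Multiset.card t : ℝ) - (Multiset.card s : ℝ)) * h x₀)
        = Wp edist x₀ 1 ((diagCon x₀).mk' s) ((diagCon x₀).mk' t) ∧
      ∀ h' : X → ℝ, LipschitzWith 1 h' →
        ENNReal.ofReal ((s.map h').sum - (t.map h').sum
            + ((Multiset.card t : ℝ) - (Multiset.card s : ℝ)) * h' x₀)
          ≤ Wp edist x₀ 1 ((diagCon x₀).mk' s) ((diagCon x₀).mk' t) := by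
  simp only [sum_map_sub_sum_map_add_eq_diagPairing_sub]
  set r := Multiset.card s + Multiset.card t
  set x := padTo x₀ (mFun s) r
  set y := padTo x₀ (mFun t) r
  obtain ⟨σ₀, hσ₀⟩ := Finite.exists_min fun σ : Equiv.Perm (Fin r) => ∑ k, dist (x k) (y (σ k))
  obtain ⟨h, hh, hcost⟩ := exists_lipschitzWith_sum_dist_le x y σ₀ hσ₀
  refine ⟨h, hh, le_antisymm (ofReal_diagPairing_sub_le_Wp x₀ hh s t) ?_,
    fun h' hh' => ofReal_diagPairing_sub_le_Wp x₀ hh' s t⟩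
  calc Wp edist x₀ 1 ((diagCon x₀).mk' s) ((diagCon x₀).mk' t)
      ≤ WpM edist x₀ 1 s t := Wp_mk_le_WpM _ x₀ 1 s t
    _ ≤ ENNReal.ofReal (∑ k, dist (x k) (y (σ₀ k))) := by
      rw [WpM, matchCost_edist_one]
      exact iInf_le _ σ₀
    _ ≤ ENNReal.ofReal (diagPairing x₀ h s - diagPairing x₀ h t) := by
      rw [diagPairing_sub_eq_sum_padTo x₀ h s t le_self_add le_add_self]
      exact ENNReal.ofReal_le_ofReal hcost
end
end
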